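/- Let G be a connected graph and let S ⊆ V(G) be such that the number of connected components of G - S is at least |S| + 2. Then the path eccentricity of G is at least the minimum, over all components C of G - S, of the maximum distance in G from a vertex of C to the set S. -/

import Mathlib

open SimpleGraph

variable {V : Type*} [Fintype V] [DecidableEq V]

/-- Distance from a vertex `u` to the vertex set of a walk `P`. -/
noncomputable def walkDist (G : SimpleGraph V) {a b : V} (P : G.Walk a b) (u : V) : ℕ :=
  P.support.toFinset.inf' ⟨a, List.mem_toFinset.mpr P.start_mem_support⟩ (fun x => G.dist u x)

/-- Eccentricity of a walk: max distance from any vertex of `G` to the walk. -/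
noncomputable def eccW (G : SimpleGraph V) {a b : V} (P : G.Walk a b) : ℕ :=
  Finset.univ.sup (walkDist G P)

/-- Path eccentricity of a graph. -/
noncomputable def pe (G : SimpleGraph V) : ℕ :=
  sInf {m | ∃ (a b : V) (P : G.Walk a b), P.IsPath ∧ eccW G P = m}

/-- `P` is a longest path in `G`. -/
def IsLongestPath (G : SimpleGraph V) {a b : V} (P : G.Walk a b) : Prop :=
  P.IsPath ∧ ∀ (c d : V) (Q : G.Walk c d), Q.IsPath → Q.length ≤ P.length

/-- `G` is `k`-connected. -/
def KConnected (k : ℕ) (G : SimpleGraph V) : Prop :=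
  k + 1 ≤ Fintype.card V ∧
    ∀ S : Finset V, S.card < k → (G.induce ((↑S : Set V)ᶜ)).Connected

/-!
A path `P` of minimum eccentricity visits each vertex of `S` at most once, and between two
consecutive visits it stays inside a single component of `G - S`; so it meets at most `|S| + 1`
of the at least `|S| + 2` components. If `C` is a component that `P` misses and `u ∈ C`, a shortest
path from `u` to `P` has to leave `C` and therefore passes through `S`, whence
`d(u, S) ≤ d(u, P) ≤ pe G`.
-/

open Finset

theorem List.Nodup.countP_mem_le_card {α : Type*} [DecidableEq α] {l : List α} (hl : l.Nodup)
    (S : Finset α) :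
    l.countP (· ∈ S) ≤ #S := by
  rw [List.countP_eq_length_filter, ← List.toFinset_card_of_nodup (hl.filter _)]
  exact card_le_card fun x hx => by simpa using (List.mem_filter.mp (List.mem_toFinset.mp hx)).2

theorem Finset.exists_notMem_of_card_lt_natCard {α : Type*} [Finite α] {s : Finset α}
    (h : #s < Nat.card α) : ∃ x, x ∉ s := by
  have := Fintype.ofFinite α
  obtain ⟨x, -, hx⟩ := exists_mem_notMem_of_card_lt_card (s := s) (t := univ)
    (by rwa [card_univ, ← Nat.card_eq_fintype_card])
  exact ⟨x, hx⟩

namespace SimpleGraph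

variable {G : SimpleGraph V}

omit [Fintype V] in
theorem Reachable.exists_notMem_dist_le_of_not_reachable_induce {s : Set V} {v p : V}
    (hvp : G.Reachable v p) (hv : v ∈ s)
    (hp : ∀ hp : p ∈ s, ¬(G.induce s).Reachable ⟨v, hv⟩ ⟨p, hp⟩) :
    ∃ x ∉ s, G.dist v x ≤ G.dist v p := by
  obtain ⟨W, hW⟩ := hvp.exists_walk_length_eq_dist
  by_cases hWs : ∀ x ∈ W.support, x ∈ s
  · exact absurd (W.induce s hWs).reachable (hp _)
  · push Not at hWs
    obtain ⟨x, hxW, hxs⟩ := hWs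
    exact ⟨x, hxs, (dist_le _).trans ((W.length_takeUntil_le_length hxW).trans hW.le)⟩

omit [Fintype V] in
theorem Walk.card_image_filter_notMem_le_countP {α : Type*} [DecidableEq α] (S : Finset V)
    (g : V → α) (hg : ∀ x y, G.Adj x y → x ∉ S → y ∉ S → g x = g y) {a b : V} (W : G.Walk a b) :
    #((W.support.toFinset.filter (· ∉ S)).image g) ≤
      W.support.countP (· ∈ S) + if a ∈ S then 0 else 1 := by
  -- the sharper bound for walks starting in `S` is what makes the induction go through
  induction W with
  | @nil u => by_cases hu : u ∈ S <;> simp [hu, filter_singleton]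
  | @cons a b c hab W ih =>
    simp only [Walk.support_cons, List.toFinset_cons, Finset.filter_insert, List.countP_cons]
    by_cases ha : a ∈ S
    · simp only [ha, not_true_eq_false, if_false, decide_true, if_true]
      split at ih <;> omega
    by_cases hb : b ∈ S
    · simp only [ha, hb, not_false_eq_true, if_true, if_false, decide_false, image_insert] at ih ⊢
      exact (card_insert_le _ _).trans (by omega)
    · have hgb : g a ∈ (W.support.toFinset.filter (· ∉ S)).image g :=
        hg a b hab ha hb ▸ mem_image_of_mem g (by simp [hb, W.start_mem_support])
      simpa only [ha, hb, not_false_eq_true, if_true, if_false, decide_false, Bool.false_eq_true,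
        image_insert, insert_eq_of_mem hgb] using ih

theorem exists_connectedComponent_disjoint_support {S : Finset V}
    (h : #S + 2 ≤ Nat.card (G.induce (↑S : Set V)ᶜ).ConnectedComponent) {a b : V}
    {P : G.Walk a b} (hP : P.IsPath) :
    ∃ C : (G.induce (↑S : Set V)ᶜ).ConnectedComponent, ∀ u ∈ C.supp, (u : V) ∉ P.support := by
  classical
  set H := G.induce (↑S : Set V)ᶜ
  obtain ⟨C₀⟩ : Nonempty H.ConnectedComponent := (Nat.card_pos_iff.mp (by omega)).1
  -- the component map of `G - S`, with an arbitrary value on `S`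
  let g : V → H.ConnectedComponent := fun x =>
    if hx : x ∈ (↑S : Set V)ᶜ then H.connectedComponentMk ⟨x, hx⟩ else C₀
  have hg : ∀ x (hx : x ∈ (↑S : Set V)ᶜ), g x = H.connectedComponentMk ⟨x, hx⟩ :=
    fun x hx => dif_pos hx
  have hg_adj : ∀ x y, G.Adj x y → x ∉ S → y ∉ S → g x = g y := fun x y hxy hx hy => by
    rw [hg x hx, hg y hy]
    exact ConnectedComponent.sound (induce_adj.2 hxy).reachable
  have hcount := P.card_image_filter_notMem_le_countP S g hg_adj
  have hS := hP.support_nodup.countP_mem_le_card S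
  obtain ⟨C, hC⟩ := exists_notMem_of_card_lt_natCard
    (s := (P.support.toFinset.filter (· ∉ S)).image g) (by split at hcount <;> omega)
  refine ⟨C, fun u hu huP => hC ?_⟩
  rw [← (C.mem_supp_iff u).1 hu, ← hg u u.2]
  exact mem_image_of_mem g (mem_filter.2 ⟨List.mem_toFinset.2 huP, u.2⟩)

end SimpleGraph

open SimpleGraph

theorem exists_isPath_eccW_eq_pe [Nonempty V] (G : SimpleGraph V) :
    ∃ (a b : V) (P : G.Walk a b), P.IsPath ∧ eccW G P = pe G :=
  Nat.sInf_mem (s := {m | ∃ (a b : V) (P : G.Walk a b), P.IsPath ∧ eccW G P = m})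
    ⟨_, Classical.arbitrary V, _, Walk.nil, Walk.IsPath.nil, rfl⟩

omit [Fintype V] in
theorem exists_mem_support_walkDist_eq (G : SimpleGraph V) {a b : V} (P : G.Walk a b) (u : V) :
    ∃ p ∈ P.support, walkDist G P u = G.dist u p := by
  obtain ⟨p, hp, hpu⟩ := exists_mem_eq_inf' _ (fun x => G.dist u x)
  exact ⟨p, List.mem_toFinset.mp hp, hpu⟩

theorem walkDist_le_eccW {G : SimpleGraph V} {a b : V} (P : G.Walk a b) (u : V) :
    walkDist G P u ≤ eccW G P :=
  le_sup (mem_univ u)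

omit [Fintype V] in
theorem exists_mem_dist_le_walkDist {G : SimpleGraph V} (hG : G.Connected) {S : Finset V}
    {C : (G.induce (↑S : Set V)ᶜ).ConnectedComponent} {a b : V} {P : G.Walk a b}
    (hC : ∀ u ∈ C.supp, (u : V) ∉ P.support) {u : ↥((↑S : Set V)ᶜ)} (hu : u ∈ C.supp) :
    ∃ s ∈ S, G.dist u s ≤ walkDist G P u := by
  obtain ⟨p, hpP, hp⟩ := exists_mem_support_walkDist_eq G P u
  rw [hp]
  have hp_out : ∀ hp : p ∈ (↑S : Set V)ᶜ, ¬(G.induce (↑S : Set V)ᶜ).Reachable u ⟨p, hp⟩ :=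
    fun hp hup =>
      hC ⟨p, hp⟩ ((ConnectedComponent.sound hup).symm.trans ((C.mem_supp_iff u).1 hu)) hpP
  obtain ⟨s, hs, hsd⟩ :=
    (hG.preconnected u p).exists_notMem_dist_le_of_not_reachable_induce u.2 hp_out
  exact ⟨s, by simpa using hs, hsd⟩

theorem stmt0 (G : SimpleGraph V) (hG : G.Connected) (S : Finset V)
    (h : S.card + 2 ≤ Nat.card ((G.induce ((↑S : Set V)ᶜ)).ConnectedComponent)) :
    (⨅ C : (G.induce ((↑S : Set V)ᶜ)).ConnectedComponent,
        ⨆ u : C.supp, S.inf (fun x => (G.dist u.1.1 x : ℕ∞))) ≤ (pe G : ℕ∞) := by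
  have := hG.nonempty
  obtain ⟨a, b, P, hP, hPe⟩ := exists_isPath_eccW_eq_pe G
  obtain ⟨C, hC⟩ := exists_connectedComponent_disjoint_support h hP
  refine (iInf_le _ C).trans (iSup_le fun u => ?_)
  obtain ⟨s, hs, hsu⟩ := exists_mem_dist_le_walkDist hG hC u.2
  calc S.inf (fun x => (G.dist u.1.1 x : ℕ∞)) ≤ G.dist u.1.1 s := inf_le hs
    _ ≤ pe G := by rw [← hPe]; exact_mod_cast hsu.trans (walkDist_le_eccW P u)
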